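/- Let g, h : ℝ³ → ℝ be differentiable, and suppose there is r ≠ 0 with ‖∇g(x)‖ = r for all x with g(x) = 0, where h(u) = ‖u‖² − 1. Define Γ(x,u) = ⟨∇g(x), u + v(x)⟩ for a map v : ℝ³ → ℝ³. If |⟨∇g(x), v(x)⟩| < r for all x with g(x) = 0, then for every x, u with g(x) = 0, h(u) = 0 and Γ(x,u) = 0, the vectors ∂Γ/∂u (x,u) = ∇g(x) and ∇h(u) = 2u are linearly independent. -/

import Mathlib

open InnerProductSpace

theorem linearIndependent_pair_of_norm_inner_lt {𝕜 E : Type*} [RCLike 𝕜] [NormedAddCommGroup E]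
    [InnerProductSpace 𝕜 E] {x y : E} (h : ‖⟪x, y⟫_𝕜‖ < ‖x‖ * ‖y‖) :
    LinearIndependent 𝕜 ![x, y] := by
  have hx : x ≠ 0 := by
    rintro rfl
    simp at h
  rw [LinearIndependent.pair_iff' hx]
  rintro a rfl
  have parallel_iff := (norm_inner_eq_norm_tfae 𝕜 x (a • x)).out 0 2
  exact h.ne (parallel_iff.2 (Or.inr ⟨a, rfl⟩))

theorem stmt_0_general (v : EuclideanSpace ℝ (Fin 3) → EuclideanSpace ℝ (Fin 3))
    (g : EuclideanSpace ℝ (Fin 3) → ℝ)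
    (h : EuclideanSpace ℝ (Fin 3) → ℝ) (hh : ∀ u, h u = ‖u‖ ^ 2 - 1)
    (r : ℝ)
    (hgrad : ∀ x, g x = 0 → ‖gradient g x‖ = r)
    (hreg : ∀ x, g x = 0 → |(⟪gradient g x, v x⟫_ℝ)| < r) :
    ∀ x u : EuclideanSpace ℝ (Fin 3), g x = 0 → h u = 0 →
      ⟪gradient g x, u + v x⟫_ℝ = 0 →
      LinearIndependent ℝ ![gradient g x, (2 : ℝ) • u] := by
  intro x u hgx hhu hΓ
  have hu : ‖u‖ = 1 :=
    (pow_eq_one_iff_of_nonneg (norm_nonneg u) two_ne_zero).1 (by linarith [hh u])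
  have hinner : ⟪gradient g x, u⟫_ℝ = -⟪gradient g x, v x⟫_ℝ := by
    rw [inner_add_right] at hΓ
    linarith
  apply linearIndependent_pair_of_norm_inner_lt
  -- |⟪∇g x, 2 • u⟫| = 2 |⟪∇g x, v x⟫| < 2 r = ‖∇g x‖ * ‖2 • u‖
  rw [Real.norm_eq_abs, inner_smul_right, abs_mul, norm_smul, hu, hinner, abs_neg, hgrad x hgx,
    Real.norm_two, mul_one, abs_two, mul_comm r]
  exact mul_lt_mul_of_pos_left (hreg x hgx) two_pos

/-- Regularity of the state constraint: under the regularity assumption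
`|⟨∇g x, v x⟩| < r` on the zero level set of `g`, the vectors `∇g x` and `2 • u`
are linearly independent whenever `g x = 0`, `h u = 0` and `Γ(x,u) = 0`. -/
theorem stmt_0 (v : EuclideanSpace ℝ (Fin 3) → EuclideanSpace ℝ (Fin 3))
    (g : EuclideanSpace ℝ (Fin 3) → ℝ) (hg : Differentiable ℝ g)
    (h : EuclideanSpace ℝ (Fin 3) → ℝ) (hh : ∀ u, h u = ‖u‖ ^ 2 - 1)
    (r : ℝ) (hr : r ≠ 0)
    (hgrad : ∀ x, g x = 0 → ‖gradient g x‖ = r)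
    (hreg : ∀ x, g x = 0 → |(⟪gradient g x, v x⟫_ℝ)| < r) :
    ∀ x u : EuclideanSpace ℝ (Fin 3), g x = 0 → h u = 0 →
      ⟪gradient g x, u + v x⟫_ℝ = 0 →
      LinearIndependent ℝ ![gradient g x, (2 : ℝ) • u] :=
  stmt_0_general v g h hh r hgrad hreg
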